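/- Let d be a positive integer and let P be any rational-valued function on the set of partitions of d. Then there exists a polynomial p in Q[X] of degree at most d such that for every finite field F_q, the sum over all monic squarefree polynomials f of degree d in F_q[x] of P(factorization type of f) equals p(q). -/

import Mathlib

/-!
A monic squarefree polynomial is the product of a uniquely determined finite set of monic
irreducibles, so those of factorization type `μ` correspond to choosing, for each part `j` of `μ`,
`count j μ` distinct monic irreducibles of degree `j`. Their number is
`∏ⱼ (N_q(j) choose count j μ)`, where `N_q(j)` is the number of monic irreducibles of degree `j`.
By Gauss's identity `∑_{e ∣ n} e N_q(e) = qⁿ` (the factorization of `X^{qⁿ} - X`) and Möbius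
inversion, `N_q(j)` is a polynomial in `q` of degree at most `j`, so the count is a polynomial of
degree at most `∑ⱼ j · count j μ = d`.
-/

open Polynomial

/-- The factorization type of a polynomial over a field: the multiset of degrees of its
irreducible factors, counted with multiplicity. -/
noncomputable def factorizationType {F : Type*} [Field F] (f : F[X]) : Multiset ℕ :=
  (UniqueFactorizationMonoid.factors f).map natDegree

open Finset UniqueFactorizationMonoid

namespace Finset

variable {β κ : Type*} [DecidableEq κ]

theorem val_map_eq_iff {s : Finset β} {g : β → κ} {μ : Multiset κ} :
    s.val.map g = μ ↔ ∀ j, #{b ∈ s | g b = j} = μ.count j := by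
  rw [Multiset.ext]
  refine forall_congr' fun j => ?_
  rw [Multiset.count_map, card_def, filter_val]
  simp only [eq_comm]

variable [DecidableEq β]

theorem filter_biUnion_attach_eq {t : Finset κ} {φ : ∀ j ∈ t, Finset β} {g : β → κ}
    (hφ : ∀ j hj, ∀ b ∈ φ j hj, g b = j) {j : κ} (hj : j ∈ t) :
    {b ∈ t.attach.biUnion (fun j => φ j.1 j.2) | g b = j} = φ j hj := by
  ext b
  simp only [mem_filter, mem_biUnion, mem_attach, true_and, Subtype.exists]
  constructor
  · rintro ⟨⟨j', hj', hb⟩, rfl⟩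
    obtain rfl := hφ j' hj' b hb
    exact hb
  · exact fun hb => ⟨⟨j, hj, hb⟩, hφ j hj b hb⟩

theorem card_filter_powerset_val_map_eq (U : Finset β) (g : β → κ) (μ : Multiset κ) :
    #{s ∈ U.powerset | s.val.map g = μ} =
      ∏ j ∈ μ.toFinset, (#{b ∈ U | g b = j}).choose (μ.count j) := by
  simp_rw [← card_powersetCard, ← card_pi]
  set T := μ.toFinset.pi fun j => powersetCard (μ.count j) {b ∈ U | g b = j}
  have mem_T {φ} : φ ∈ T ↔
      ∀ j hj, φ j hj ⊆ U ∧ (∀ b ∈ φ j hj, g b = j) ∧ #(φ j hj) = μ.count j := by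
    simp only [T, mem_pi, mem_powersetCard, subset_iff, mem_filter]
    grind
  let glue (φ : ∀ j ∈ μ.toFinset, Finset β) : Finset β :=
    μ.toFinset.attach.biUnion fun j => φ j.1 j.2
  have mem_glue {φ b} : b ∈ glue φ ↔ ∃ j hj, b ∈ φ j hj := by simp [glue]
  have filter_glue {φ} (hφ : φ ∈ T) {j} (hj : j ∈ μ.toFinset) : {b ∈ glue φ | g b = j} = φ j hj :=
    filter_biUnion_attach_eq (fun j hj => (mem_T.mp hφ j hj).2.1) hj
  refine card_nbij' (fun s j _ => {b ∈ s | g b = j}) glue ?_ ?_ ?_ ?_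
  · intro s hs
    simp only [coe_filter, mem_powerset, Set.mem_ofPred_eq] at hs
    exact mem_T.mpr fun j _ => ⟨(filter_subset _ _).trans hs.1,
      fun b hb => (mem_filter.mp hb).2, val_map_eq_iff.mp hs.2 j⟩
  · intro φ hφ
    simp only [coe_filter, mem_powerset, Set.mem_ofPred_eq]
    refine ⟨fun b hb => ?_, val_map_eq_iff.mpr fun j => ?_⟩
    · obtain ⟨j, hj, hb⟩ := mem_glue.mp hb
      exact (mem_T.mp hφ j hj).1 hb
    by_cases hj : j ∈ μ.toFinset
    · rw [filter_glue hφ hj, (mem_T.mp hφ j hj).2.2]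
    · rw [Multiset.count_eq_zero.mpr (mt Multiset.mem_toFinset.mpr hj), card_eq_zero,
        filter_eq_empty_iff]
      rintro b hb rfl
      obtain ⟨j, hj', hb⟩ := mem_glue.mp hb
      exact hj ((mem_T.mp hφ j hj').2.1 b hb ▸ hj')
  · intro s hs
    simp only [coe_filter, mem_powerset, Set.mem_ofPred_eq] at hs
    ext b
    simp only [mem_glue, mem_filter]
    refine ⟨fun ⟨_, _, hb, _⟩ => hb, fun hb => ⟨g b, ?_, hb, rfl⟩⟩
    rw [Multiset.mem_toFinset, ← hs.2]
    exact Multiset.mem_map_of_mem g hb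
  · intro φ hφ
    funext j hj
    exact filter_glue hφ hj

end Finset

namespace Polynomial

section Field

variable {K : Type*} [Field K] [DecidableEq K]

theorem factorizationType_eq_map_normalizedFactors (f : K[X]) :
    factorizationType f = (normalizedFactors f).map natDegree := by
  rw [factorizationType, normalizedFactors, Multiset.map_map]
  exact Multiset.map_congr rfl fun p _ => (natDegree_eq_of_degree_eq degree_normalize).symm

theorem val_toFinset_normalizedFactors {f : K[X]} (hf : Squarefree f) :
    (normalizedFactors f).toFinset.val = normalizedFactors f := by
  rw [Multiset.toFinset_val, Multiset.dedup_eq_self]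
  exact (squarefree_iff_nodup_normalizedFactors hf.ne_zero).mp hf

theorem prod_toFinset_normalizedFactors {f : K[X]} (hm : f.Monic) (hf : Squarefree f) :
    ∏ p ∈ (normalizedFactors f).toFinset, p = f := by
  rw [prod_eq_multiset_prod, Multiset.map_id', val_toFinset_normalizedFactors hf,
    prod_normalizedFactors_eq hm.ne_zero, hm.normalize_eq_self]

theorem normalizedFactors_prod_of_monic_irreducible {s : Finset K[X]}
    (hs : ∀ p ∈ s, p.Monic ∧ Irreducible p) : normalizedFactors (∏ p ∈ s, p) = s.val := by
  rw [prod_eq_multiset_prod, Multiset.map_id',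
    normalizedFactors_prod_eq _ fun p hp => (hs p hp).2]
  exact (Multiset.map_congr rfl fun p hp => (hs p hp).1.normalize_eq_self).trans s.val.map_id

theorem natCard_squarefree_factorizationType_eq_card_filter_powerset {μ : Multiset ℕ} {d : ℕ}
    (hμ : μ.sum = d) {U : Finset K[X]}
    (hU : ∀ p, p ∈ U ↔ p.Monic ∧ Irreducible p ∧ p.natDegree ∈ μ) :
    Nat.card {f : K[X] // f.Monic ∧ f.natDegree = d ∧ Squarefree f ∧ factorizationType f = μ} =
      #{s ∈ U.powerset | s.val.map natDegree = μ} := by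
  have monic_irreducible_of_mem {s} (hs : s ∈ {s ∈ U.powerset | s.val.map natDegree = μ}) :
      ∀ p ∈ s, p.Monic ∧ Irreducible p := fun p hp =>
    ((hU p).mp (mem_powerset.mp (mem_filter.mp hs).1 hp)).imp_right And.left
  rw [← Nat.card_eq_finsetCard]
  refine Nat.card_congr
    { toFun f := ⟨(normalizedFactors f.1).toFinset, ?_⟩
      invFun s := ⟨∏ p ∈ s.1, p, ?_⟩
      left_inv f := Subtype.ext (prod_toFinset_normalizedFactors f.2.1 f.2.2.2.1)
      right_inv s := Subtype.ext ?_ }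
  · obtain ⟨f, hm, -, hf, htype⟩ := f
    rw [factorizationType_eq_map_normalizedFactors] at htype
    show (normalizedFactors f).toFinset ∈ _
    rw [mem_filter, mem_powerset, val_toFinset_normalizedFactors hf]
    refine ⟨fun p hp => (hU p).mpr ?_, htype⟩
    rw [Multiset.mem_toFinset] at hp
    obtain ⟨hirr, hpm, -⟩ := (Polynomial.mem_normalizedFactors_iff hm.ne_zero).mp hp
    exact ⟨hpm, hirr, htype ▸ Multiset.mem_map_of_mem _ hp⟩
  · obtain ⟨s, hs⟩ := s
    have hirr := monic_irreducible_of_mem hs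
    have hnf := normalizedFactors_prod_of_monic_irreducible hirr
    rw [mem_filter] at hs
    have hm : (∏ p ∈ s, p).Monic := monic_prod_of_monic _ _ fun p hp => (hirr p hp).1
    refine ⟨hm, ?_, ?_, ?_⟩
    · rw [natDegree_prod_of_monic _ _ fun p hp => (hirr p hp).1, ← hμ, ← hs.2,
        sum_eq_multiset_sum]
    · rw [squarefree_iff_nodup_normalizedFactors hm.ne_zero, hnf]
      exact s.nodup
    · rw [factorizationType_eq_map_normalizedFactors, hnf, hs.2]
  · obtain ⟨s, hs⟩ := s
    show (normalizedFactors (∏ p ∈ s, p)).toFinset = s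
    rw [normalizedFactors_prod_of_monic_irreducible (monic_irreducible_of_mem hs), val_toFinset]

end Field

section FiniteField

variable (F : Type*) [Field F] [Finite F]

theorem finite_setOf_natDegree_le (n : ℕ) : {f : F[X] | f.natDegree ≤ n}.Finite := by
  have : Finite (degreeLT F (n + 1)) := .of_equiv _ (degreeLTEquiv F (n + 1)).toEquiv.symm
  refine (Set.toFinite (degreeLT F (n + 1) : Set F[X])).subset fun f (hf : f.natDegree ≤ n) => ?_
  rw [SetLike.mem_coe, mem_degreeLT]
  exact degree_le_natDegree.trans_lt (by exact_mod_cast Nat.lt_succ_of_le hf)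

noncomputable def monicIrreducibles (n : ℕ) : Finset F[X] :=
  Set.Finite.toFinset (s := {f : F[X] | f.Monic ∧ Irreducible f ∧ f.natDegree = n})
    ((finite_setOf_natDegree_le F n).subset fun _ hf => hf.2.2.le)

variable {F}

@[simp]
theorem mem_monicIrreducibles {n : ℕ} {f : F[X]} :
    f ∈ monicIrreducibles F n ↔ f.Monic ∧ Irreducible f ∧ f.natDegree = n :=
  Set.Finite.mem_toFinset _

theorem squarefree_X_pow_card_pow_sub_X {n : ℕ} (hn : n ≠ 0) :
    Squarefree (X ^ Nat.card F ^ n - X : F[X]) := by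
  refine (galois_poly_separable (ringChar F) _ (dvd_pow ?_ hn)).squarefree
  have := Fintype.ofFinite F
  rw [← CharP.cast_eq_zero_iff F, Nat.card_eq_fintype_card, FiniteField.cast_card_eq_zero]

theorem sum_divisors_mul_card_monicIrreducibles {n : ℕ} (hn : 0 < n) :
    ∑ e ∈ n.divisors, e * #(monicIrreducibles F e) = Nat.card F ^ n := by
  classical
  set g : F[X] := X ^ Nat.card F ^ n - X
  have hq : 1 < Nat.card F := Finite.one_lt_card
  have hg : g.Monic :=
    monic_X_pow_sub (degree_X.trans_lt (by exact_mod_cast Nat.one_lt_pow hn.ne' hq))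
  have factors_g : (normalizedFactors g).toFinset = n.divisors.biUnion (monicIrreducibles F) := by
    ext p
    simp only [Multiset.mem_toFinset, Polynomial.mem_normalizedFactors_iff hg.ne_zero,
      mem_biUnion, Nat.mem_divisors, mem_monicIrreducibles]
    constructor
    · rintro ⟨hirr, hm, hdvd⟩
      exact ⟨_, ⟨hirr.natDegree_dvd_iff_dvd_X_pow_card_pow_sub_X.mpr hdvd, hn.ne'⟩, hm, hirr, rfl⟩
    · rintro ⟨_, ⟨hdvd, -⟩, hm, hirr, rfl⟩
      exact ⟨hirr, hm, hirr.natDegree_dvd_iff_dvd_X_pow_card_pow_sub_X.mp hdvd⟩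
  have disjoint : (n.divisors : Set ℕ).PairwiseDisjoint (monicIrreducibles F) :=
    fun e _ e' _ he => disjoint_left.mpr fun p hp hp' =>
      he ((mem_monicIrreducibles.mp hp).2.2.symm.trans (mem_monicIrreducibles.mp hp').2.2)
  calc ∑ e ∈ n.divisors, e * #(monicIrreducibles F e)
      = ∑ e ∈ n.divisors, ∑ p ∈ monicIrreducibles F e, p.natDegree := by
        refine sum_congr rfl fun e _ => ?_
        rw [sum_congr rfl fun p hp => (mem_monicIrreducibles.mp hp).2.2, sum_const, smul_eq_mul,
          mul_comm]
    _ = (∏ p ∈ (normalizedFactors g).toFinset, p).natDegree := by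
        rw [factors_g, natDegree_prod_of_monic _ _ fun p hp => ?_, sum_biUnion disjoint]
        obtain ⟨e, -, hp⟩ := mem_biUnion.mp hp
        exact (mem_monicIrreducibles.mp hp).1
    _ = Nat.card F ^ n := by
        rw [prod_toFinset_normalizedFactors hg (squarefree_X_pow_card_pow_sub_X hn.ne'),
          FiniteField.X_pow_card_pow_sub_X_natDegree_eq F hn.ne' hq]

theorem natCard_squarefree_factorizationType {μ : Multiset ℕ} {d : ℕ} (hμ : μ.sum = d) :
    Nat.card {f : F[X] // f.Monic ∧ f.natDegree = d ∧ Squarefree f ∧ factorizationType f = μ} =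
      ∏ j ∈ μ.toFinset, (#(monicIrreducibles F j)).choose (μ.count j) := by
  classical
  set U := μ.toFinset.biUnion (monicIrreducibles F)
  have mem_U (p) : p ∈ U ↔ p.Monic ∧ Irreducible p ∧ p.natDegree ∈ μ := by
    simp only [U, mem_biUnion, Multiset.mem_toFinset, mem_monicIrreducibles]
    grind
  rw [natCard_squarefree_factorizationType_eq_card_filter_powerset hμ mem_U,
    card_filter_powerset_val_map_eq]
  refine prod_congr rfl fun j hj => ?_
  congr 2
  ext p
  rw [mem_filter, mem_U, mem_monicIrreducibles]
  grind

end FiniteField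

end Polynomial

noncomputable def necklacePoly (n : ℕ) : ℚ[X] :=
  C (n : ℚ)⁻¹ * ∑ x ∈ n.divisorsAntidiagonal, C (ArithmeticFunction.moebius x.1 : ℚ) * X ^ x.2

theorem natDegree_necklacePoly_le (n : ℕ) : (necklacePoly n).natDegree ≤ n := by
  refine (natDegree_C_mul_le _ _).trans (natDegree_sum_le_of_forall_le _ _ fun x hx => ?_)
  exact (natDegree_C_mul_X_pow_le _ _).trans
    (Nat.divisor_le (Nat.snd_mem_divisors_of_mem_antidiagonal hx))

theorem eval_necklacePoly (F : Type*) [Field F] [Finite F] {n : ℕ} (hn : 0 < n) :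
    (necklacePoly n).eval (Nat.card F : ℚ) = #(monicIrreducibles F n) := by
  have moebius_inversion := ArithmeticFunction.sum_eq_iff_sum_mul_moebius_eq
    (f := fun e => (e * #(monicIrreducibles F e) : ℚ)) (g := fun m => (Nat.card F : ℚ) ^ m) |>.mp
    (fun m hm => by exact_mod_cast sum_divisors_mul_card_monicIrreducibles hm) n hn
  simp only [necklacePoly, eval_mul, eval_C, eval_finsetSum, eval_pow, eval_X]
  rw [moebius_inversion, inv_mul_cancel_left₀ (by exact_mod_cast hn.ne')]

noncomputable def binomialPoly (k : ℕ) : ℚ[X] := C (k.factorial : ℚ)⁻¹ * descPochhammer ℚ k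

theorem natDegree_binomialPoly_le (k : ℕ) : (binomialPoly k).natDegree ≤ k :=
  (natDegree_C_mul_le _ _).trans (descPochhammer_natDegree ℚ k).le

theorem eval_binomialPoly (k n : ℕ) : (binomialPoly k).eval (n : ℚ) = n.choose k := by
  rw [binomialPoly, eval_mul, eval_C, descPochhammer_eval_eq_descFactorial,
    Nat.descFactorial_eq_factorial_mul_choose, Nat.cast_mul,
    inv_mul_cancel_left₀ (by exact_mod_cast k.factorial_ne_zero)]

noncomputable def factorizationTypePoly (μ : Multiset ℕ) : ℚ[X] :=
  ∏ j ∈ μ.toFinset, (binomialPoly (μ.count j)).comp (necklacePoly j)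

theorem natDegree_factorizationTypePoly_le (μ : Multiset ℕ) :
    (factorizationTypePoly μ).natDegree ≤ μ.sum := by
  rw [sum_multiset_count]
  refine (natDegree_prod_le _ _).trans (sum_le_sum fun j _ => ?_)
  exact natDegree_comp_le.trans
    (Nat.mul_le_mul (natDegree_binomialPoly_le _) (natDegree_necklacePoly_le j))

theorem eval_factorizationTypePoly (F : Type*) [Field F] [Finite F] {μ : Multiset ℕ}
    (hμ : ∀ j ∈ μ, 0 < j) :
    (factorizationTypePoly μ).eval (Nat.card F : ℚ) =
      (∏ j ∈ μ.toFinset, (#(monicIrreducibles F j)).choose (μ.count j) : ℕ) := by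
  rw [factorizationTypePoly, eval_prod, Nat.cast_prod]
  refine prod_congr rfl fun j hj => ?_
  rw [eval_comp, eval_necklacePoly F (hμ j (Multiset.mem_toFinset.mp hj)), eval_binomialPoly]

theorem statement12_general (d : ℕ) (P : Nat.Partition d → ℚ) :
    ∃ p : Polynomial ℚ, p.natDegree ≤ d ∧
      ∀ (F : Type) [Field F] [Fintype F],
        ∑ lam : Nat.Partition d, P lam *
            (Nat.card {f : F[X] // f.Monic ∧ f.natDegree = d ∧ Squarefree f ∧
              factorizationType f = lam.parts} : ℚ) =
          p.eval (Fintype.card F : ℚ) := by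
  refine ⟨∑ lam : Nat.Partition d, C (P lam) * factorizationTypePoly lam.parts,
    natDegree_sum_le_of_forall_le _ _ fun lam _ => ?_, fun F _ _ => ?_⟩
  · exact (natDegree_C_mul_le _ _).trans
      ((natDegree_factorizationTypePoly_le _).trans_eq lam.parts_sum)
  · simp only [eval_finsetSum, eval_mul, eval_C, Fintype.card_eq_nat_card,
      eval_factorizationTypePoly F fun _ => Nat.Partition.parts_pos _,
      natCard_squarefree_factorizationType (Nat.Partition.parts_sum _)]

/-- For any factorization statistic `P` on partitions of `d`, there is a polynomial
`p ∈ ℚ[X]` of degree at most `d` such that for every finite field `F_q`,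
`∑_{f monic squarefree, deg f = d} P(factorization type of f) = p(q)`. -/
theorem statement12 (d : ℕ) (hd : 0 < d) (P : Nat.Partition d → ℚ) :
    ∃ p : Polynomial ℚ, p.natDegree ≤ d ∧
      ∀ (F : Type) [Field F] [Fintype F],
        ∑ lam : Nat.Partition d, P lam *
            (Nat.card {f : F[X] // f.Monic ∧ f.natDegree = d ∧ Squarefree f ∧
              factorizationType f = lam.parts} : ℚ) =
          p.eval (Fintype.card F : ℚ) :=
  statement12_general d P
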